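/- Let (X, ℬ, μ, T) be a conservative, ergodic, measure-preserving transformation of a σ-finite measure space. Let f, g ∈ L¹(X, μ) with g > 0 μ-almost everywhere and ∫_X g dμ ≠ 0. Then, μ-almost everywhere, lim_{n→∞} S_n f / S_n g = (∫_X f dμ) / (∫_X g dμ). (Hopf's theorem, ergodic version.) -/

import Mathlib

open MeasureTheory Filter Topology

/-- `T` is conservative w.r.t. `μ`: every set of positive measure returns to itself. -/
def IsConservative {X : Type*} [MeasurableSpace X] (T : X → X) (μ : Measure X) : Prop :=
  ∀ A : Set X, MeasurableSet A → 0 < μ A → ∃ n ≥ 1, 0 < μ (A ∩ (T^[n]) ⁻¹' A)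

/-- Birkhoff sum `S_n f = ∑_{k<n} f ∘ T^k`. -/
noncomputable def birkhoff {X : Type*} (T : X → X) (f : X → ℝ) (n : ℕ) (x : X) : ℝ :=
  ∑ k ∈ Finset.range n, f (T^[k] x)

/-!
For `c > ∫ f / ∫ g` pick `∫ f / ∫ g < c' < c`, so that `h = f - c' g` has negative integral.
Hopf's maximal inequality `∫_{max (S_0 h, …, S_N h) > 0} h ≥ 0` shows that the invariant set
where `sup_n S_n h = ∞` cannot have full measure, so by ergodicity `S_n h` is bounded above a.e.
Poincaré recurrence makes `S_n g → ∞` a.e., hence `S_n f / S_n g = c' + S_n h / S_n g` is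
eventually below `c`. Applying this to `-f` gives the matching lower bound.
-/

open Set

theorem tendsto_sum_range_atTop_of_frequently_lt {v : ℕ → ℝ} {ε : ℝ} (hv : ∀ n, 0 ≤ v n)
    (hε : 0 < ε) (hfreq : ∃ᶠ n in atTop, ε < v n) :
    Tendsto (fun n => ∑ k ∈ Finset.range n, v k) atTop atTop := by
  refine (not_summable_iff_tendsto_nat_atTop_of_nonneg hv).1 fun hsum => ?_
  exact hfreq ((hsum.tendsto_atTop_zero.eventually (gt_mem_nhds hε)).mono fun n hn => hn.not_gt)

theorem eventually_div_lt_of_sub_mul_le {ι : Type*} {l : Filter ι} {a b : ι → ℝ} {c c' M : ℝ}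
    (hc : c' < c) (hb : Tendsto b l atTop) (hM : ∀ i, a i - c' * b i ≤ M) :
    ∀ᶠ i in l, a i / b i < c := by
  filter_upwards [hb.eventually_gt_atTop 0, hb.eventually_gt_atTop (M / (c - c'))]
    with i hpos hbig
  rw [div_lt_iff₀ (sub_pos.2 hc)] at hbig
  rw [div_lt_iff₀ hpos]
  linarith [hM i]

theorem tendsto_of_forall_rat_eventually {ι : Type*} {l : Filter ι} {u : ι → ℝ} {L : ℝ}
    (hup : ∀ q : ℚ, L < q → ∀ᶠ i in l, u i < q) (hlow : ∀ q : ℚ, (q : ℝ) < L → ∀ᶠ i in l, q < u i) :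
    Tendsto u l (𝓝 L) := by
  refine tendsto_order.2 ⟨fun b hb => ?_, fun b hb => ?_⟩
  · obtain ⟨q, hbq, hqL⟩ := exists_rat_btwn hb
    exact (hlow q hqL).mono fun i hi => hbq.trans hi
  · obtain ⟨q, hLq, hqb⟩ := exists_rat_btwn hb
    exact (hup q hLq).mono fun i hi => hi.trans hqb

section

variable {X : Type*} {T : X → X} {f g h : X → ℝ}

theorem bddAbove_range_birkhoffSum_apply_iff {x : X} :
    BddAbove (range fun n => birkhoffSum T h n (T x)) ↔
      BddAbove (range fun n => birkhoffSum T h n x) := by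
  simp only [bddAbove_def, forall_mem_range]
  constructor
  · rintro ⟨M, hM⟩
    refine ⟨max 0 (h x + M), fun n => ?_⟩
    cases n with
    | zero => simp
    | succ n =>
      rw [birkhoffSum_succ']
      exact le_max_of_le_right (by linarith [hM n])
  · rintro ⟨M, hM⟩
    refine ⟨M - h x, fun n => ?_⟩
    linarith [hM (n + 1), birkhoffSum_succ' T h n x]

noncomputable def birkhoffMax (T : X → X) (h : X → ℝ) : ℕ → X → ℝ
  | 0 => 0
  | N + 1 => birkhoffMax T h N ⊔ birkhoffSum T h (N + 1)

theorem birkhoffMax_mono : Monotone (birkhoffMax T h) :=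
  monotone_nat_of_le_succ fun _ _ => le_max_left _ _

theorem birkhoffMax_nonneg (N : ℕ) (x : X) : 0 ≤ birkhoffMax T h N x :=
  birkhoffMax_mono (Nat.zero_le N) x

theorem birkhoffSum_le_birkhoffMax {n N : ℕ} (hn : n ≤ N) (x : X) :
    birkhoffSum T h n x ≤ birkhoffMax T h N x := by
  induction N with
  | zero => simp [Nat.le_zero.1 hn, birkhoffMax]
  | succ N ih =>
    rcases Nat.of_le_succ hn with hn | rfl
    · exact (ih hn).trans (le_max_left _ _)
    · exact le_max_right _ _

theorem birkhoffMax_succ (N : ℕ) (x : X) :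
    birkhoffMax T h (N + 1) x = max 0 (h x + birkhoffMax T h N (T x)) := by
  induction N generalizing x with
  | zero => simp [birkhoffMax]
  | succ N ih =>
    change max (birkhoffMax T h (N + 1) x) (birkhoffSum T h (N + 2) x) =
      max 0 (h x + max (birkhoffMax T h N (T x)) (birkhoffSum T h (N + 1) (T x)))
    rw [ih, birkhoffSum_succ' T h (N + 1), ← max_add_add_left, ← max_assoc]

theorem birkhoffMax_le_max (N : ℕ) (x : X) :
    birkhoffMax T h N x ≤ max 0 (h x + birkhoffMax T h N (T x)) :=
  birkhoffMax_succ (T := T) N x ▸ birkhoffMax_mono N.le_succ x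

variable [MeasurableSpace X] {μ : Measure X}

theorem Measurable.birkhoffSum (hT : Measurable T) (hh : Measurable h) (n : ℕ) :
    Measurable (birkhoffSum T h n) :=
  Finset.measurable_sum _ fun k _ => hh.comp (hT.iterate k)

theorem MeasureTheory.Integrable.birkhoffSum (hT : MeasurePreserving T μ μ) (hh : Integrable h μ)
    (n : ℕ) : Integrable (birkhoffSum T h n) μ :=
  integrable_finsetSum _ fun k _ => (hT.iterate k).integrable_comp_of_integrable hh

theorem MeasureTheory.MeasurePreserving.integral_comp_of_aestronglyMeasurable
    (hT : MeasurePreserving T μ μ) (hh : AEStronglyMeasurable h μ) :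
    ∫ x, h (T x) ∂μ = ∫ x, h x ∂μ := by
  rw [← integral_map (f := h) hT.aemeasurable (by rwa [hT.map_eq]), hT.map_eq]

theorem measurable_birkhoffMax (hT : Measurable T) (hh : Measurable h) :
    ∀ N, Measurable (birkhoffMax T h N)
  | 0 => measurable_const
  | N + 1 => (measurable_birkhoffMax hT hh N).max (hT.birkhoffSum hh (N + 1))

theorem integrable_birkhoffMax (hT : MeasurePreserving T μ μ) (hh : Integrable h μ) :
    ∀ N, Integrable (birkhoffMax T h N) μ
  | 0 => integrable_zero X ℝ μ
  | N + 1 => (integrable_birkhoffMax hT hh N).sup (hh.birkhoffSum hT (N + 1))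

/-- Hopf's maximal ergodic inequality. -/
theorem setIntegral_birkhoffMax_pos_nonneg (hT : MeasurePreserving T μ μ) (hm : Measurable h)
    (hi : Integrable h μ) (N : ℕ) : 0 ≤ ∫ x in {x | 0 < birkhoffMax T h N x}, h x ∂μ := by
  set E := {x | 0 < birkhoffMax T h N x}
  have hE : MeasurableSet E :=
    measurableSet_lt measurable_const (measurable_birkhoffMax hT.measurable hm N)
  have hM := integrable_birkhoffMax hT hi N
  have hMT : Integrable (fun x => birkhoffMax T h N (T x)) μ := hT.integrable_comp_of_integrable hM
  -- on `E`, `M_N ≤ h + M_N ∘ T`, while `M_N` vanishes off `E` and `M_N ∘ T ≥ 0`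
  have hpointwise : ∀ x ∈ E, birkhoffMax T h N x - birkhoffMax T h N (T x) ≤ h x :=
    fun x hx => by
      have := (le_max_iff.1 (birkhoffMax_le_max (T := T) (h := h) N x)).resolve_left
        (not_le.2 hx.out)
      linarith
  calc 0 = ∫ x, birkhoffMax T h N x ∂μ - ∫ x, birkhoffMax T h N (T x) ∂μ := by
        rw [hT.integral_comp_of_aestronglyMeasurable hM.1, sub_self]
    _ ≤ ∫ x in E, birkhoffMax T h N x ∂μ - ∫ x in E, birkhoffMax T h N (T x) ∂μ := by
        rw [setIntegral_eq_integral_of_forall_compl_eq_zero (s := E) fun x hx =>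
          le_antisymm (not_lt.1 hx) (birkhoffMax_nonneg N x)]
        exact sub_le_sub_left (setIntegral_le_integral hMT
          (Eventually.of_forall fun x => birkhoffMax_nonneg N (T x))) _
    _ = ∫ x in E, (birkhoffMax T h N x - birkhoffMax T h N (T x)) ∂μ :=
        (integral_sub hM.integrableOn hMT.integrableOn).symm
    _ ≤ ∫ x in E, h x ∂μ :=
        setIntegral_mono_on (hM.integrableOn.sub hMT.integrableOn) hi.integrableOn hE hpointwise

theorem integral_nonneg_of_ae_exists_birkhoffSum_pos (hT : MeasurePreserving T μ μ)
    (hm : Measurable h) (hi : Integrable h μ)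
    (hpos : ∀ᵐ x ∂μ, ∃ n, 0 < birkhoffSum T h n x) : 0 ≤ ∫ x, h x ∂μ := by
  set E : ℕ → Set X := fun N => {x | 0 < birkhoffMax T h N x}
  have hE : ∀ N, MeasurableSet (E N) := fun N =>
    measurableSet_lt measurable_const (measurable_birkhoffMax hT.measurable hm N)
  have hmono : Monotone E := fun M N hMN x hx => hx.out.trans_le (birkhoffMax_mono hMN x)
  have hcover : ⋃ N, E N =ᵐ[μ] (univ : Set X) := by
    refine ae_eq_univ.2 (hpos.mono fun x ⟨n, hn⟩ => ?_)
    exact mem_iUnion.2 ⟨n, hn.trans_le (birkhoffSum_le_birkhoffMax le_rfl x)⟩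
  have hlim := tendsto_setIntegral_of_monotone hE hmono hi.integrableOn
  rw [setIntegral_congr_set hcover, setIntegral_univ] at hlim
  exact ge_of_tendsto' hlim (setIntegral_birkhoffMax_pos_nonneg hT hm hi)

theorem MeasureTheory.Conservative.ae_tendsto_birkhoffSum_atTop (hT : Conservative T μ)
    (hg : AEMeasurable g μ) (hgpos : ∀ᵐ x ∂μ, 0 < g x) :
    ∀ᵐ x ∂μ, Tendsto (fun n => birkhoffSum T g n x) atTop atTop := by
  have horbit : ∀ᵐ x ∂μ, ∀ k, 0 < g (T^[k] x) :=
    ae_all_iff.2 fun k => (hT.toQuasiMeasurePreserving.iterate k).ae hgpos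
  have hrec : ∀ᵐ x ∂μ, ∀ m : ℕ, 1 / ((m : ℝ) + 1) < g x →
      ∃ᶠ n in atTop, 1 / ((m : ℝ) + 1) < g (T^[n] x) :=
    ae_all_iff.2 fun m =>
      hT.ae_mem_imp_frequently_image_mem (nullMeasurableSet_lt aemeasurable_const hg)
  filter_upwards [hgpos, horbit, hrec] with x hx hxorbit hxrec
  obtain ⟨m, hm⟩ := exists_nat_one_div_lt hx
  exact tendsto_sum_range_atTop_of_frequently_lt (fun k => (hxorbit k).le) Nat.one_div_pos_of_nat
    (hxrec m hm)

theorem Ergodic.ae_bddAbove_birkhoffSum_of_integral_neg (hT : Ergodic T μ) (hi : Integrable h μ)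
    (hneg : ∫ x, h x ∂μ < 0) : ∀ᵐ x ∂μ, BddAbove (range fun n => birkhoffSum T h n x) := by
  wlog hm : Measurable h generalizing h
  · have hh' := hi.1.ae_eq_mk
    have hsums := ae_all_iff.2 fun n => hT.quasiMeasurePreserving.birkhoffSum_ae_eq_of_ae_eq hh' n
    filter_upwards [this (hi.congr hh') (by rwa [← integral_congr_ae hh'])
      hi.1.stronglyMeasurable_mk.measurable, hsums] with x hx hxsums
    simpa only [hxsums] using hx
  have hC : MeasurableSet {x | BddAbove (range fun n => birkhoffSum T h n x)} :=
    measurableSet_bddAbove_range (hT.measurable.birkhoffSum hm)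
  have hinv : T ⁻¹' {x | BddAbove (range fun n => birkhoffSum T h n x)} =
      {x | BddAbove (range fun n => birkhoffSum T h n x)} :=
    ext fun x => bddAbove_range_birkhoffSum_apply_iff
  refine (hT.ae_mem_or_ae_notMem hC hinv).resolve_right fun hunbdd => hneg.not_ge ?_
  refine integral_nonneg_of_ae_exists_birkhoffSum_pos hT.toMeasurePreserving hm hi ?_
  filter_upwards [hunbdd] with x hx
  obtain ⟨_, ⟨n, rfl⟩, hn⟩ := not_bddAbove_iff.1 hx 0
  exact ⟨n, hn⟩

theorem Ergodic.ae_eventually_birkhoffSum_div_lt (hT : Ergodic T μ) (hf : Integrable f μ)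
    (hg : Integrable g μ) (hSg : ∀ᵐ x ∂μ, Tendsto (fun n => birkhoffSum T g n x) atTop atTop)
    {c : ℝ} (hc : ∫ x, f x ∂μ < c * ∫ x, g x ∂μ) :
    ∀ᵐ x ∂μ, ∀ᶠ n in atTop, birkhoffSum T f n x / birkhoffSum T g n x < c := by
  obtain ⟨c', hc', hc'c⟩ : ∃ c', ∫ x, f x ∂μ < c' * ∫ x, g x ∂μ ∧ c' < c :=
    ((continuousAt_const.eventually_lt (continuous_mul_const _).continuousAt hc).filter_mono
      nhdsWithin_le_nhds |>.and (self_mem_nhdsWithin (s := Iio c))).exists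
  have hsub : ∀ n x, birkhoffSum T (fun x => f x - c' * g x) n x =
      birkhoffSum T f n x - c' * birkhoffSum T g n x := fun n x => by
    simp only [birkhoffSum, Finset.sum_sub_distrib, Finset.mul_sum]
  have hi : Integrable (fun x => f x - c' * g x) μ := hf.sub (hg.const_mul c')
  have hbdd := hT.ae_bddAbove_birkhoffSum_of_integral_neg hi (by
    rw [integral_sub hf (hg.const_mul c'), integral_const_mul]
    linarith)
  filter_upwards [hbdd, hSg] with x ⟨M, hM⟩ hx
  refine eventually_div_lt_of_sub_mul_le (M := M) hc'c hx fun n => ?_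
  rw [← hsub]
  exact hM (mem_range_self n)

theorem Ergodic.ae_tendsto_birkhoffSum_div (hT : Ergodic T μ) (hcons : Conservative T μ)
    (hf : Integrable f μ) (hg : Integrable g μ) (hgpos : ∀ᵐ x ∂μ, 0 < g x)
    (hgint : ∫ x, g x ∂μ ≠ 0) :
    ∀ᵐ x ∂μ, Tendsto (fun n => birkhoffSum T f n x / birkhoffSum T g n x) atTop
      (𝓝 ((∫ x, f x ∂μ) / ∫ x, g x ∂μ)) := by
  have hIg : 0 < ∫ x, g x ∂μ :=
    (integral_nonneg_of_ae (hgpos.mono fun x hx => hx.le)).lt_of_ne' hgint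
  have hSg := hcons.ae_tendsto_birkhoffSum_atTop hg.1.aemeasurable hgpos
  have hup : ∀ᵐ x ∂μ, ∀ q : ℚ, (∫ x, f x ∂μ) / ∫ x, g x ∂μ < q →
      ∀ᶠ n in atTop, birkhoffSum T f n x / birkhoffSum T g n x < q :=
    ae_all_iff.2 fun q => eventually_imp_distrib_left.2 fun hq =>
      hT.ae_eventually_birkhoffSum_div_lt hf hg hSg ((div_lt_iff₀ hIg).1 hq)
  have hlow : ∀ᵐ x ∂μ, ∀ q : ℚ, (q : ℝ) < (∫ x, f x ∂μ) / ∫ x, g x ∂μ →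
      ∀ᶠ n in atTop, q < birkhoffSum T f n x / birkhoffSum T g n x := by
    refine ae_all_iff.2 fun q => eventually_imp_distrib_left.2 fun hq => ?_
    have hneg := hT.ae_eventually_birkhoffSum_div_lt (c := -q) hf.neg hg hSg (by
      rw [integral_neg', neg_mul, neg_lt_neg_iff]
      exact (lt_div_iff₀ hIg).1 hq)
    filter_upwards [hneg] with x hx
    filter_upwards [hx] with n hn
    rw [birkhoffSum_neg, neg_div, neg_lt_neg_iff] at hn
    exact hn
  filter_upwards [hup, hlow] with x hxup hxlow
  exact tendsto_of_forall_rat_eventually hxup hxlow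

theorem MeasureTheory.MeasurePreserving.ergodic_of_measure_self_or_compl_eq_zero
    (hT : MeasurePreserving T μ μ)
    (herg : ∀ A : Set X, MeasurableSet A → T ⁻¹' A = A → μ A = 0 ∨ μ Aᶜ = 0) : Ergodic T μ :=
  ⟨hT, ⟨fun A hA hinv => eventuallyConst_set'.2 <| by
    simpa only [ae_eq_empty, ae_eq_univ] using herg A hA hinv⟩⟩

theorem IsConservative.conservative (hcons : IsConservative T μ) (hT : MeasurePreserving T μ μ) :
    Conservative T μ := by
  refine ⟨hT.quasiMeasurePreserving, fun A hA hA0 => ?_⟩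
  obtain ⟨n, hn, hpos⟩ := hcons A hA (pos_iff_ne_zero.2 hA0)
  obtain ⟨x, hxA, hxn⟩ := nonempty_of_measure_ne_zero hpos.ne'
  exact ⟨x, hxA, n, by omega, hxn⟩

end

theorem hopf_ergodic_general {X : Type*} [MeasurableSpace X] (μ : Measure X)
    (T : X → X) (hT : MeasurePreserving T μ μ) (hcons : IsConservative T μ)
    (herg : ∀ A : Set X, MeasurableSet A → T ⁻¹' A = A → μ A = 0 ∨ μ Aᶜ = 0)
    (f g : X → ℝ) (hf : Integrable f μ) (hg : Integrable g μ)
    (hgpos : ∀ᵐ x ∂μ, 0 < g x) (hgint : ∫ x, g x ∂μ ≠ 0) :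
    ∀ᵐ x ∂μ,
      Tendsto (fun n => birkhoff T f n x / birkhoff T g n x) atTop
        (𝓝 ((∫ x, f x ∂μ) / (∫ x, g x ∂μ))) :=
  (hT.ergodic_of_measure_self_or_compl_eq_zero herg).ae_tendsto_birkhoffSum_div
    (hcons.conservative hT) hf hg hgpos hgint

/-- Hopf's ratio ergodic theorem, ergodic version. -/
theorem hopf_ergodic {X : Type*} [MeasurableSpace X] (μ : Measure X) [SigmaFinite μ]
    (T : X → X) (hT : MeasurePreserving T μ μ) (hcons : IsConservative T μ)
    (herg : ∀ A : Set X, MeasurableSet A → T ⁻¹' A = A → μ A = 0 ∨ μ Aᶜ = 0)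
    (f g : X → ℝ) (hf : Integrable f μ) (hg : Integrable g μ)
    (hgpos : ∀ᵐ x ∂μ, 0 < g x) (hgint : ∫ x, g x ∂μ ≠ 0) :
    ∀ᵐ x ∂μ,
      Tendsto (fun n => birkhoff T f n x / birkhoff T g n x) atTop
        (𝓝 ((∫ x, f x ∂μ) / (∫ x, g x ∂μ))) :=
  hopf_ergodic_general μ T hT hcons herg f g hf hg hgpos hgint
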